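/- Nested Δ-time invariance for the bad-state predicate: for G-clock constraints φ₁, φ₂, φ₃, the predicate Φ(u) := ∃Δ ∈ ℝ≥0, (u+Δ ⊨ φ₁) ∧ ∀δ ∈ [0,Δ], ((u+δ ⊨ φ₂) ∧ ∀δ' ∈ [0,δ], (u+δ' ⊨ φ₃)) is invariant under extended-region equivalence: if u₁ and u₂ lie in the same extended clock region, then Φ(u₁) ↔ Φ(u₂). -/

import Mathlib

inductive CC (C : Type) : Type where
  | lt (x : C) (n : ℕ)
  | eq (x : C) (n : ℕ)
  | gt (x : C) (n : ℕ)
  | dlt (x y : C) (n : ℕ)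
  | deq (x y : C) (n : ℕ)
  | dgt (x y : C) (n : ℕ)
  | and (φ ψ : CC C)
  | or (φ ψ : CC C)

/-- Satisfaction of a clock constraint by a clock valuation `u : C → ℝ≥0`. -/
def sat {C : Type} (u : C → NNReal) : CC C → Prop
  | .lt x n => (u x : ℝ) < n
  | .eq x n => (u x : ℝ) = n
  | .gt x n => (u x : ℝ) > n
  | .dlt x y n => (u x : ℝ) - (u y : ℝ) < n
  | .deq x y n => (u x : ℝ) - (u y : ℝ) = n
  | .dgt x y n => (u x : ℝ) - (u y : ℝ) > n
  | .and φ ψ => sat u φ ∧ sat u ψ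
  | .or φ ψ => sat u φ ∨ sat u ψ

/-- `shift u δ` increases every clock by `δ`. -/
def shift {C : Type} (u : C → NNReal) (δ : NNReal) : C → NNReal := fun x => u x + δ

open Classical in
/-- `resetVal u r` maps clocks in `r` to `0` and agrees with `u` elsewhere. -/
noncomputable def resetVal {C : Type} (u : C → NNReal) (r : Set C) : C → NNReal :=
  fun x => if x ∈ r then 0 else u x

/-- `Bounded k φ`: all bounds in atomic constraints are at most the clock ceilings,
i.e. `φ` is a `G`-clock constraint. -/
def Bounded {C : Type} (k : C → ℕ) : CC C → Prop
  | .lt x n => n ≤ k x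
  | .eq x n => n ≤ k x
  | .gt x n => n ≤ k x
  | .dlt x _ n => n ≤ k x
  | .deq x _ n => n ≤ k x
  | .dgt x _ n => n ≤ k x
  | .and φ ψ => Bounded k φ ∧ Bounded k ψ
  | .or φ ψ => Bounded k φ ∧ Bounded k ψ

/-- Two valuations lie in the same extended clock region: each clock's value compares
identically with every integer up to its ceiling, and each difference of two distinct
clocks compares identically with every relevant integer. -/
def RegionEquiv {C : Type} (k : C → ℕ) (u₁ u₂ : C → NNReal) : Prop :=
  (∀ x : C, ∀ n : ℕ, n ≤ k x →
    (((u₁ x : ℝ) < n) ↔ ((u₂ x : ℝ) < n)) ∧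
    (((u₁ x : ℝ) = n) ↔ ((u₂ x : ℝ) = n)) ∧
    (((u₁ x : ℝ) > n) ↔ ((u₂ x : ℝ) > n))) ∧
  (∀ x y : C, x ≠ y → ∀ m : ℤ, -(k x : ℤ) ≤ m → m ≤ (k y : ℤ) →
    (((u₁ y : ℝ) - (u₁ x : ℝ) < (m : ℝ)) ↔ ((u₂ y : ℝ) - (u₂ x : ℝ) < (m : ℝ))) ∧
    (((u₁ y : ℝ) - (u₁ x : ℝ) = (m : ℝ)) ↔ ((u₂ y : ℝ) - (u₂ x : ℝ) = (m : ℝ))) ∧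
    (((u₁ y : ℝ) - (u₁ x : ℝ) > (m : ℝ)) ↔ ((u₂ y : ℝ) - (u₂ x : ℝ) > (m : ℝ))))

/-! Delays leave clock differences unchanged, so the region of `u + δ` is decided by how `δ`
compares with `0` and with the crossing delays `n - u x` (`n ≤ k x`). Region-equivalent `u₁`, `u₂`
order their crossing delays alike, so the pairs `(n - u₁ x, n - u₂ x)` and `(0, 0)` form a finite
partial order isomorphism of `ℝ`, and every pair `(δ₁, δ₂)` extending it gives region-equivalent
`u₁ + δ₁`, `u₂ + δ₂`. One back-and-forth step answers a delay `Δ₁` of `u₁` by some `Δ₂`, a second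
one answers each `δ₂ ≤ Δ₂` by some `δ₁ ≤ Δ₁`. As `δ' ≤ δ ≤ Δ`, the nested predicate only asks for
`φ₂ ∧ φ₃` on all of `[0, Δ]`, so these two steps suffice. -/

open Order

lemma cmp_eq_cmp_iff {α β : Type*} [LinearOrder α] [LinearOrder β] {a b : α} {c d : β} :
    cmp a b = cmp c d ↔ (a < b ↔ c < d) ∧ (a = b ↔ c = d) ∧ (a > b ↔ c > d) := by
  refine ⟨fun h => ⟨lt_iff_lt_of_cmp_eq_cmp h, eq_iff_eq_of_cmp_eq_cmp h,
    lt_iff_lt_of_cmp_eq_cmp (cmp_eq_cmp_symm.mp h)⟩, fun ⟨hlt, heq, hgt⟩ => ?_⟩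
  rcases lt_trichotomy a b with hab | hab | hab
  · rw [hab.cmp_eq_lt, (hlt.mp hab).cmp_eq_lt]
  · rw [hab.cmp_eq_eq, (heq.mp hab).cmp_eq_eq]
  · rw [hab.cmp_eq_gt, (hgt.mp hab).cmp_eq_gt]

lemma cmp_eq_cmp_of_sub_eq_sub {α : Type*} [AddGroup α] [LinearOrder α] [AddRightMono α]
    {a b c d : α} (h : a - b = c - d) : cmp a b = cmp c d := by
  rw [← cmp_sub_zero, h, cmp_sub_zero]

lemma forall_le_and_forall_le_iff {α : Type*} [Preorder α] (P Q : α → Prop) (Δ : α) :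
    (∀ δ ≤ Δ, P δ ∧ ∀ δ' ≤ δ, Q δ') ↔ ∀ δ ≤ Δ, P δ ∧ Q δ :=
  ⟨fun H δ hδ => ⟨(H δ hδ).1, (H δ hδ).2 δ le_rfl⟩,
    fun H δ hδ => ⟨(H δ hδ).1, fun δ' hδ' => (H δ' (hδ'.trans hδ)).2⟩⟩

lemma Order.PartialIso.le_iff_le {α β : Type*} [LinearOrder α] [LinearOrder β]
    (f : PartialIso α β) {p q : α × β} (hp : p ∈ f.val) (hq : q ∈ f.val) : p.1 ≤ q.1 ↔ p.2 ≤ q.2 :=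
  le_iff_le_of_cmp_eq_cmp (f.prop p hp q hq)

variable {C : Type} {k : C → ℕ} {u₁ u₂ : C → NNReal}

lemma regionEquiv_iff_cmp :
    RegionEquiv k u₁ u₂ ↔
      (∀ x n, n ≤ k x → cmp (u₁ x : ℝ) n = cmp (u₂ x : ℝ) n) ∧
      (∀ x y, x ≠ y → ∀ m : ℤ, -(k x : ℤ) ≤ m → m ≤ (k y : ℤ) →
        cmp ((u₁ y : ℝ) - u₁ x) m = cmp ((u₂ y : ℝ) - u₂ x) m) := by
  simp only [RegionEquiv, cmp_eq_cmp_iff]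

namespace RegionEquiv

lemma symm (h : RegionEquiv k u₁ u₂) : RegionEquiv k u₂ u₁ := by
  rw [regionEquiv_iff_cmp] at h ⊢
  exact ⟨fun x n hn => (h.1 x n hn).symm,
    fun x y hxy m hm hm' => (h.2 x y hxy m hm hm').symm⟩

lemma sat_iff (h : RegionEquiv k u₁ u₂) {φ : CC C} (hφ : Bounded k φ) :
    sat u₁ φ ↔ sat u₂ φ := by
  have hdiff : ∀ x y n, n ≤ k x → cmp ((u₁ x : ℝ) - u₁ y) n = cmp ((u₂ x : ℝ) - u₂ y) n := by
    intro x y n hn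
    rcases eq_or_ne y x with rfl | hyx
    · simp
    · exact_mod_cast (regionEquiv_iff_cmp.mp h).2 y x hyx n (by omega) (by exact_mod_cast hn)
  induction φ with
  | lt x n => exact (h.1 x n hφ).1
  | eq x n => exact (h.1 x n hφ).2.1
  | gt x n => exact (h.1 x n hφ).2.2
  | dlt x y n => exact lt_iff_lt_of_cmp_eq_cmp (hdiff x y n hφ)
  | deq x y n => exact eq_iff_eq_of_cmp_eq_cmp (hdiff x y n hφ)
  | dgt x y n => exact (cmp_eq_cmp_iff.mp (hdiff x y n hφ)).2.2
  | and φ ψ ihφ ihψ => exact and_congr (ihφ hφ.1) (ihψ hφ.2)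
  | or φ ψ ihφ ihψ => exact or_congr (ihφ hφ.1) (ihψ hφ.2)

end RegionEquiv

noncomputable def crossingDelays [Fintype C] (k : C → ℕ) (u₁ u₂ : C → NNReal) : Finset (ℝ × ℝ) :=
  insert (0, 0) (Finset.univ.biUnion fun x =>
    (Finset.range (k x + 1)).image fun n : ℕ => ((n : ℝ) - u₁ x, (n : ℝ) - u₂ x))

namespace RegionEquiv

variable [Fintype C]

lemma cmp_crossingDelays (h : RegionEquiv k u₁ u₂) :
    ∀ p ∈ crossingDelays k u₁ u₂, ∀ q ∈ crossingDelays k u₁ u₂, cmp p.1 q.1 = cmp p.2 q.2 := by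
  rw [regionEquiv_iff_cmp] at h
  have hzero : ∀ x, ∀ n ≤ k x, cmp (0 : ℝ) (n - u₁ x) = cmp (0 : ℝ) (n - u₂ x) := by
    intro x n hn
    rw [cmp_eq_cmp_of_sub_eq_sub (b := (n : ℝ) - u₁ x) (c := (u₁ x : ℝ)) (d := n) (by ring),
      cmp_eq_cmp_of_sub_eq_sub (b := (n : ℝ) - u₂ x) (c := (u₂ x : ℝ)) (d := n) (by ring)]
    exact h.1 x n hn
  simp only [crossingDelays, Finset.mem_insert, Finset.mem_biUnion, Finset.mem_univ,
    Finset.mem_image, Finset.mem_range, true_and]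
  rintro _ (rfl | ⟨x, n, hn, rfl⟩) _ (rfl | ⟨y, m, hm, rfl⟩)
  · rfl
  · exact hzero y m (by omega)
  · exact cmp_eq_cmp_symm.mpr (hzero x n (by omega))
  · dsimp only
    rcases eq_or_ne x y with rfl | hxy
    · rw [cmp_eq_cmp_of_sub_eq_sub (c := (n : ℝ)) (d := m) (by ring),
        cmp_eq_cmp_of_sub_eq_sub (a := (n : ℝ) - u₂ x) (c := (n : ℝ)) (d := m) (by ring)]
    · have key := h.2 x y hxy (m - n) (by omega) (by omega)
      push_cast at key
      rwa [cmp_eq_cmp_of_sub_eq_sub (c := (u₁ y : ℝ) - u₁ x) (d := m - n) (by ring),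
        cmp_eq_cmp_of_sub_eq_sub (a := (n : ℝ) - u₂ x) (c := (u₂ y : ℝ) - u₂ x) (d := m - n)
          (by ring)]

noncomputable def crossingIso (h : RegionEquiv k u₁ u₂) : PartialIso ℝ ℝ :=
  ⟨crossingDelays k u₁ u₂, h.cmp_crossingDelays⟩

lemma zero_mem_crossingIso (h : RegionEquiv k u₁ u₂) : ((0 : ℝ), (0 : ℝ)) ∈ h.crossingIso.val :=
  Finset.mem_insert_self _ _

lemma shift_of_mem (h : RegionEquiv k u₁ u₂) {f : PartialIso ℝ ℝ} (hf : h.crossingIso ≤ f)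
    {δ₁ δ₂ : NNReal} (hδ : ((δ₁ : ℝ), (δ₂ : ℝ)) ∈ f.val) :
    RegionEquiv k (shift u₁ δ₁) (shift u₂ δ₂) := by
  have hcross : ∀ x, ∀ n ≤ k x, ((n : ℝ) - u₁ x, (n : ℝ) - u₂ x) ∈ f.val := fun x n hn =>
    hf <| Finset.mem_insert_of_mem <| Finset.mem_biUnion.mpr ⟨x, Finset.mem_univ x,
      Finset.mem_image.mpr ⟨n, Finset.mem_range.mpr (Nat.lt_succ_of_le hn), rfl⟩⟩
  rw [regionEquiv_iff_cmp] at h ⊢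
  simp only [shift, NNReal.coe_add]
  refine ⟨fun x n hn => ?_, fun x y hxy m hm hm' => ?_⟩
  · rw [cmp_eq_cmp_of_sub_eq_sub (c := (δ₁ : ℝ)) (d := n - u₁ x) (by ring),
      cmp_eq_cmp_of_sub_eq_sub (a := (u₂ x : ℝ) + δ₂) (c := (δ₂ : ℝ)) (d := n - u₂ x) (by ring)]
    exact f.prop _ hδ _ (hcross x n hn)
  · rw [add_sub_add_right_eq_sub, add_sub_add_right_eq_sub]
    exact h.2 x y hxy m hm hm'

lemma exists_shift (h : RegionEquiv k u₁ u₂) (Δ₁ : NNReal) :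
    ∃ Δ₂ : NNReal, RegionEquiv k (shift u₁ Δ₁) (shift u₂ Δ₂) ∧
      ∀ δ₂ ≤ Δ₂, ∃ δ₁ ≤ Δ₁, RegionEquiv k (shift u₁ δ₁) (shift u₂ δ₂) := by
  obtain ⟨f, ⟨b, hb⟩, hf⟩ := (PartialIso.definedAtLeft ℝ (Δ₁ : ℝ)).isCofinal h.crossingIso
  have h0f : ((0 : ℝ), (0 : ℝ)) ∈ f.val := hf h.zero_mem_crossingIso
  lift b to NNReal using (PartialIso.le_iff_le f h0f hb).mp Δ₁.coe_nonneg
  refine ⟨b, h.shift_of_mem hf hb, fun δ₂ hδ₂ => ?_⟩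
  obtain ⟨g, ⟨a, ha⟩, hfg⟩ := (PartialIso.definedAtRight ℝ (δ₂ : ℝ)).isCofinal f
  lift a to NNReal using (PartialIso.le_iff_le g (hfg h0f) ha).mpr δ₂.coe_nonneg
  exact ⟨a, NNReal.coe_le_coe.mp ((PartialIso.le_iff_le g ha (hfg hb)).mpr hδ₂),
    h.shift_of_mem (hf.trans hfg) ha⟩

lemma exists_shift_forall_le (h : RegionEquiv k u₁ u₂) {φ ψ : CC C} (hφ : Bounded k φ)
    (hψ : Bounded k ψ) (H : ∃ Δ, sat (shift u₁ Δ) φ ∧ ∀ δ ≤ Δ, sat (shift u₁ δ) ψ) :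
    ∃ Δ, sat (shift u₂ Δ) φ ∧ ∀ δ ≤ Δ, sat (shift u₂ δ) ψ := by
  obtain ⟨Δ₁, hφΔ₁, hψΔ₁⟩ := H
  obtain ⟨Δ₂, hΔ, hback⟩ := h.exists_shift Δ₁
  refine ⟨Δ₂, (hΔ.sat_iff hφ).mp hφΔ₁, fun δ₂ hδ₂ => ?_⟩
  obtain ⟨δ₁, hδ₁, hδ⟩ := hback δ₂ hδ₂
  exact (hδ.sat_iff hψ).mp (hψΔ₁ δ₁ hδ₁)

end RegionEquiv

/-- Nested Δ-time invariance for the bad-state predicate: the predicate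
  Φ(u) := ∃Δ, (u+Δ ⊨ φ₁) ∧ ∀δ ∈ [0,Δ], ((u+δ ⊨ φ₂) ∧ ∀δ' ∈ [0,δ], (u+δ' ⊨ φ₃))
is invariant under extended-region equivalence, for G-clock constraints φ₁, φ₂, φ₃. -/
theorem nested_delta_time_invariance {C : Type} [Fintype C] (k : C → ℕ) (φ₁ φ₂ φ₃ : CC C)
    (h₁ : Bounded k φ₁) (h₂ : Bounded k φ₂) (h₃ : Bounded k φ₃)
    (u₁ u₂ : C → NNReal) (h : RegionEquiv k u₁ u₂) :
    (∃ Δ : NNReal, sat (shift u₁ Δ) φ₁ ∧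
      ∀ δ ≤ Δ, sat (shift u₁ δ) φ₂ ∧ ∀ δ' ≤ δ, sat (shift u₁ δ') φ₃) ↔
    (∃ Δ : NNReal, sat (shift u₂ Δ) φ₁ ∧
      ∀ δ ≤ Δ, sat (shift u₂ δ) φ₂ ∧ ∀ δ' ≤ δ, sat (shift u₂ δ') φ₃) := by
  have h₂₃ : Bounded k (.and φ₂ φ₃) := ⟨h₂, h₃⟩
  simp only [forall_le_and_forall_le_iff]
  exact ⟨h.exists_shift_forall_le h₁ h₂₃, h.symm.exists_shift_forall_le h₁ h₂₃⟩
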